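/- arXiv:2407.03731 — 2 statements merged into one kernel-verified Lean document; each statement's English description precedes it below -/
import Mathlib

section
/- Let p(x) = T_n(x) + Σ_{j=0}^{n-1} b_j T_j(x) with real coefficients b_j, where T_j are Chebyshev polynomials of the first kind. Then the roots of p are exactly the eigenvalues of the n×n colleague matrix A = H - (1/2)e_1 c^T, where H is the symmetric tridiagonal matrix with zero diagonal, off-diagonal entries 1/2 except the (n-1,n) and (n,n-1) entries which equal √2/2, e_1 is the first standard basis vector, and c = (b_{n-1}, ..., b_1, √2 b_0). -/
/-!
Conjugating the symmetric colleague matrix by `diag(1, …, 1, √2)` gives Good's colleague matrix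
`B`, whose off-diagonal entries are all `1/2` except `B (n-1) (n-2) = 1`. Apart from the first
one, the rows of `B v = z v` read, with `s k = v (n-1-k)`, `s 1 = z s 0` and
`s (k+2) = 2 z s (k+1) - s k`: the three-term recurrence of `T_k(z)`. So every eigenvector is a
multiple of `(T_{n-1}(z), …, T_1(z), T_0(z))`, and the first row of `B` applied to that vector
leaves exactly the defect `p(z) / 2`.
-/

open Polynomial Polynomial.Chebyshev Matrix

theorem Matrix.mem_spectrum_iff_exists_mulVec_eq_smul {K ι : Type*} [Field K] [Fintype ι]
    [DecidableEq ι] (M : Matrix ι ι K) (μ : K) :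
    μ ∈ spectrum K M ↔ ∃ v ≠ 0, M *ᵥ v = μ • v := by
  rw [← spectrum_toLin', ← Module.End.hasEigenvalue_iff_mem_spectrum]
  constructor
  · intro h
    obtain ⟨v, hv, hv0⟩ := h.exists_hasEigenvector
    exact ⟨v, hv0, by simpa [Module.End.mem_eigenspace_iff] using hv⟩
  · rintro ⟨v, hv0, hv⟩
    exact Module.End.hasEigenvalue_of_hasEigenvector
      ⟨by simpa [Module.End.mem_eigenspace_iff] using hv, hv0⟩

section Chebyshev

variable {R : Type*} [CommRing R]

theorem Polynomial.Chebyshev.eval_T_natCast_add_two (z : R) (k : ℕ) :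
    (T R ↑(k + 2)).eval z = 2 * z * (T R ↑(k + 1)).eval z - (T R k).eval z := by
  push_cast
  simp [T_add_two]

theorem Polynomial.Chebyshev.eq_mul_eval_T_of_recurrence {z : R} {s : ℕ → R} {N : ℕ}
    (h1 : s 1 = z * s 0) (hrec : ∀ k, k + 2 < N → s (k + 2) = 2 * z * s (k + 1) - s k) :
    ∀ k < N, s k = s 0 * (T R k).eval z := by
  intro k
  induction k using Nat.twoStepInduction with
  | zero => simp
  | one => simp [h1, mul_comm]
  | more k ih0 ih1 =>
    intro hk
    rw [hrec k hk, ih1 (by omega), ih0 (by omega), eval_T_natCast_add_two]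
    ring

noncomputable def chebSeries (b : ℕ → R) (n : ℕ) : R[X] :=
  T R n + ∑ j ∈ Finset.range n, C (b j) * T R j

theorem chebSeries_map {S : Type*} [CommRing S] (f : R →+* S) (b : ℕ → R) (n : ℕ) :
    (chebSeries b n).map f = chebSeries (f ∘ b) n := by
  simp [chebSeries, Polynomial.map_sum, map_T]

noncomputable def chebVec (z : R) (n : ℕ) : Fin n → R :=
  fun i => (T R ↑(n - 1 - i.val)).eval z

theorem sum_rev_mul_chebVec (b : ℕ → R) (n : ℕ) (z : R) :
    ∑ l : Fin n, b (n - 1 - l.val) * chebVec z n l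
      = ∑ j ∈ Finset.range n, b j * (T R j).eval z :=
  (Fin.sum_univ_eq_sum_range (fun l => b (n - 1 - l) * (T R ↑(n - 1 - l)).eval z) n).trans
    (Finset.sum_range_reflect (fun j => b j * (T R j).eval z) n)

end Chebyshev

variable {K : Type*} [Field K]

def colleagueMatrix (b : ℕ → K) (n : ℕ) : Matrix (Fin n) (Fin n) K :=
  Matrix.of fun i j =>
    (if j.val = i.val + 1 then 1 / 2
      else if i.val = j.val + 1 then (if i.val + 1 = n then 1 else 1 / 2) else 0)
    - if i.val = 0 then b (n - 1 - j.val) / 2 else 0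

section Rows

variable (b : ℕ → K) {n : ℕ} (w : Fin n → K)

theorem colleagueMatrix_mulVec_last_row {i j : Fin n} (hi : i.val + 1 = n)
    (hj : j.val + 1 = i.val) : (colleagueMatrix b n *ᵥ w) i = w j := by
  rw [mulVec, dotProduct, Fintype.sum_eq_single j]
  · simp only [colleagueMatrix, of_apply]
    split_ifs <;> first | omega | ring1
  · intro l hl
    have := Fin.val_ne_iff.mpr hl
    have := l.isLt
    simp only [colleagueMatrix, of_apply]
    split_ifs <;> first | omega | ring1

theorem colleagueMatrix_mulVec_inner_row {i j k : Fin n} (hj : j.val + 1 = i.val)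
    (hk : i.val + 1 = k.val) : (colleagueMatrix b n *ᵥ w) i = (w j + w k) / 2 := by
  have := k.isLt
  rw [mulVec, dotProduct, Fintype.sum_eq_add j k (fun h => by omega)]
  · simp only [colleagueMatrix, of_apply]
    split_ifs <;> first | omega | ring1
  · rintro l ⟨hlj, hlk⟩
    have := Fin.val_ne_iff.mpr hlj
    have := Fin.val_ne_iff.mpr hlk
    simp only [colleagueMatrix, of_apply]
    split_ifs <;> first | omega | ring1

theorem colleagueMatrix_mulVec_first_row {i j : Fin n} (hi : i.val = 0) (hj : j.val = 1) :
    (colleagueMatrix b n *ᵥ w) i = (w j - ∑ l, b (n - 1 - l.val) * w l) / 2 := by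
  have hentry : ∀ l, colleagueMatrix b n i l * w l =
      (if l = j then w l / 2 else 0) - b (n - 1 - l.val) * w l / 2 := by
    intro l
    have := j.isLt
    simp only [colleagueMatrix, of_apply, ← Fin.val_inj]
    split_ifs <;> first | omega | ring1
  rw [mulVec, dotProduct, Finset.sum_congr rfl fun l _ => hentry l, Finset.sum_sub_distrib,
    Finset.sum_ite_eq', if_pos (Finset.mem_univ _), ← Finset.sum_div]
  ring

end Rows

section Eigenvectors

variable [NeZero (2 : K)] (b : ℕ → K) {n : ℕ} (z : K)

theorem colleagueMatrix_mulVec_chebVec (hn : 2 ≤ n) (i : Fin n) :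
    (colleagueMatrix b n *ᵥ chebVec z n) i
      = z * chebVec z n i - if i.val = 0 then (chebSeries b n).eval z / 2 else 0 := by
  have hi := i.isLt
  by_cases h0 : i.val = 0
  · rw [colleagueMatrix_mulVec_first_row b _ h0 (j := ⟨1, by omega⟩) rfl, if_pos h0,
      sum_rev_mul_chebVec]
    obtain ⟨m, rfl⟩ : ∃ m, n = m + 2 := ⟨n - 2, by omega⟩
    simp only [chebVec, chebSeries, h0, eval_add, eval_finsetSum, eval_mul, eval_C]
    rw [show m + 2 - 1 - 1 = m by omega, show m + 2 - 1 - 0 = m + 1 by omega,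
      eval_T_natCast_add_two]
    push_cast
    field_simp
    ring
  by_cases hl : i.val + 1 = n
  · rw [colleagueMatrix_mulVec_last_row b _ hl (j := ⟨n - 2, by omega⟩) (by simp; omega),
      if_neg h0]
    simp [chebVec, show n - 1 - (n - 2) = 1 by omega, show n - 1 - i.val = 0 by omega]
  · rw [colleagueMatrix_mulVec_inner_row b _ (j := ⟨i.val - 1, by omega⟩)
      (k := ⟨i.val + 1, by omega⟩) (by simp; omega) rfl, if_neg h0]
    obtain ⟨m, hm⟩ : ∃ m, n - 1 - i.val = m + 1 := ⟨n - 2 - i.val, by omega⟩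
    simp only [chebVec, hm, show n - 1 - (i.val - 1) = m + 2 by omega,
      show n - 1 - (i.val + 1) = m by omega, eval_T_natCast_add_two]
    field_simp
    ring

theorem eq_smul_chebVec_of_colleagueMatrix_mulVec (hn : 2 ≤ n) {w : Fin n → K}
    (hw : ∀ i : Fin n, 0 < i.val → (colleagueMatrix b n *ᵥ w) i = z * w i) :
    w = w ⟨n - 1, by omega⟩ • chebVec z n := by
  set s : ℕ → K := fun k => w ⟨n - 1 - k, by omega⟩
  have h1 : s 1 = z * s 0 := by
    have := hw ⟨n - 1, by omega⟩ (by simp; omega)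
    rwa [colleagueMatrix_mulVec_last_row b w (j := ⟨n - 1 - 1, by omega⟩) (by simp; omega)
      (by simp; omega)] at this
  have hrec : ∀ k, k + 2 < n → s (k + 2) = 2 * z * s (k + 1) - s k := by
    intro k hk
    have := hw ⟨n - 2 - k, by omega⟩ (by simp; omega)
    rw [colleagueMatrix_mulVec_inner_row b w (j := ⟨n - 1 - (k + 2), by omega⟩)
      (k := ⟨n - 1 - k, by omega⟩) (by simp; omega) (by simp; omega)] at this
    simp only [s, show n - 1 - (k + 1) = n - 2 - k by omega]
    field_simp at this
    linear_combination this
  funext i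
  have := eq_mul_eval_T_of_recurrence h1 hrec (n - 1 - i.val) (by omega)
  simp only [s, show n - 1 - (n - 1 - i.val) = i.val by omega] at this
  simpa [chebVec] using this

theorem mem_spectrum_colleagueMatrix_iff (hn : 2 ≤ n) :
    z ∈ spectrum K (colleagueMatrix b n) ↔ (chebSeries b n).IsRoot z := by
  have hv := colleagueMatrix_mulVec_chebVec b z hn
  rw [mem_spectrum_iff_exists_mulVec_eq_smul]
  constructor
  · rintro ⟨w, hw0, hw⟩
    have hwv := eq_smul_chebVec_of_colleagueMatrix_mulVec b z hn fun i _ => congrFun hw i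
    have hα : w ⟨n - 1, by omega⟩ ≠ 0 := fun h => hw0 (by rw [hwv, h, zero_smul])
    have hrow := congrFun hw ⟨0, by omega⟩
    rw [hwv, mulVec_smul] at hrow
    simp only [Pi.smul_apply, smul_eq_mul, hv, if_pos] at hrow
    have : w ⟨n - 1, by omega⟩ * ((chebSeries b n).eval z / 2) = 0 := by
      linear_combination -hrow
    simpa [hα, two_ne_zero] using this
  · intro hp
    have hlast : chebVec z n ⟨n - 1, by omega⟩ = 1 := by simp [chebVec]
    refine ⟨chebVec z n, fun h => by simpa [hlast] using congrFun h ⟨n - 1, by omega⟩, ?_⟩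
    funext i
    simp [hv, hp.eq_zero]

end Eigenvectors

def symmColleagueMatrix (r : K) (b : ℕ → K) (n : ℕ) : Matrix (Fin n) (Fin n) K :=
  Matrix.of fun i j =>
    (if j.val = i.val + 1 ∨ i.val = j.val + 1 then
        (if i.val + j.val = 2 * n - 3 then r / 2 else 1 / 2) else 0)
      - 1 / 2 * (if i.val = 0 then (if j.val = n - 1 then r * b 0 else b (n - 1 - j.val)) else 0)

def lastEntryScaling [NeZero (2 : K)] {r : K} (hr : r * r = 2) (n : ℕ) :
    (Matrix (Fin n) (Fin n) K)ˣ :=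
  have h : diagonal (fun i : Fin n => if i.val + 1 = n then r else 1)
      * diagonal (fun i => if i.val + 1 = n then r / 2 else 1) = 1 := by
    rw [diagonal_mul_diagonal, ← diagonal_one]
    congr 1
    funext i
    split_ifs
    · field_simp
      linear_combination hr
    · ring
  ⟨_, _, h, mul_eq_one_comm.mp h⟩

theorem symmColleagueMatrix_eq_conj [NeZero (2 : K)] {r : K} (hr : r * r = 2) (b : ℕ → K)
    {n : ℕ} (hn : 2 ≤ n) :
    symmColleagueMatrix r b n
      = (↑(lastEntryScaling hr n)⁻¹ : Matrix (Fin n) (Fin n) K) * colleagueMatrix b n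
        * (lastEntryScaling hr n : Matrix (Fin n) (Fin n) K) := by
  ext i j
  have := i.isLt
  have := j.isLt
  simp only [symmColleagueMatrix, colleagueMatrix, lastEntryScaling, of_apply, Units.inv_mk,
    diagonal_mul, mul_diagonal, Units.val_mk]
  split_ifs <;> first | omega | ring1 | (rw [show n - 1 - (j : ℕ) = 0 by omega]; ring1)

/-- The roots of `p(x) = T_n(x) + ∑_{j<n} b_j T_j(x)` are exactly the eigenvalues of the
colleague matrix `A = H - (1/2) e₁ cᵀ`. -/
theorem colleague_matrix_roots (n : ℕ) (hn : 2 ≤ n) (b : ℕ → ℝ)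
    (H : Matrix (Fin n) (Fin n) ℝ)
    (hH : ∀ i j : Fin n, H i j =
      if j.val = i.val + 1 ∨ i.val = j.val + 1 then
        (if i.val + j.val = 2 * n - 3 then Real.sqrt 2 / 2 else 1 / 2)
      else 0)
    (c : Fin n → ℝ)
    (hc : ∀ j : Fin n, c j =
      if j.val = n - 1 then Real.sqrt 2 * b 0 else b (n - 1 - j.val))
    (A : Matrix (Fin n) (Fin n) ℝ)
    (hA : ∀ i j : Fin n, A i j = H i j - (1 / 2) * (if i.val = 0 then c j else 0)) :
    ∀ z : ℂ,
      ((Polynomial.Chebyshev.T ℝ (n : ℤ) +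
          ∑ j ∈ Finset.range n, C (b j) * Polynomial.Chebyshev.T ℝ (j : ℤ)).map
            (algebraMap ℝ ℂ)).IsRoot z
        ↔ z ∈ spectrum ℂ (A.map (algebraMap ℝ ℂ)) := by
  intro z
  have hr : (Real.sqrt 2 : ℂ) * Real.sqrt 2 = 2 := by
    norm_cast
    exact Real.mul_self_sqrt zero_le_two
  have hA_eq :
      A.map (algebraMap ℝ ℂ) = symmColleagueMatrix (Real.sqrt 2 : ℂ) (fun j => b j) n := by
    ext i j
    simp only [map_apply, hA, hH, hc, symmColleagueMatrix, of_apply, Complex.coe_algebraMap]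
    split_ifs <;> push_cast <;> ring1
  rw [hA_eq, symmColleagueMatrix_eq_conj hr _ hn, spectrum.units_conjugate',
    mem_spectrum_colleagueMatrix_iff _ _ hn]
  exact iff_of_eq (congrArg (IsRoot · z) (chebSeries_map (algebraMap ℝ ℂ) b n))
end

section
/- Let p be a polynomial with a root r of multiplicity ℓ ≥ 1, so that p^{(ℓ)}(r) ≠ 0. Write p(x) = Σ_{j=0}^n b_j φ_j(x) where each φ_j is a polynomial with |φ_j(x)| ≤ 1 on [-1,1] and r ∈ [-1,1]. Then for every 0 < ε sufficiently small, the perturbed polynomial p̃(x) = p(x) + ε φ_k(x) has a root r̃ with |r - r̃| ≤ ε^{1/ℓ} |p^{(ℓ)}(r)/ℓ!|^{-1/ℓ} (1 + o(1)) as ε → 0. -/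
/-!
Write `p = (X - r)^ℓ g`, so that `g(r) = p^{(ℓ)}(r)/ℓ! ≠ 0`. A root `r + w` of `p + ε φ_k` solves
`w^ℓ = ε u(r + w)` with `u = -φ_k / g`. Taking `ℓ`-th roots turns this into the fixed-point
equation `w = (ε u(r))^{1/ℓ} (u(r + w)/u(r))^{1/ℓ}`, whose right-hand side is a contraction of a
ball of radius `≈ (ε |u(r)|)^{1/ℓ}` once `ε` is small. Finally `|u(r)| ≤ 1/|g(r)|`, as
`|φ_k(r)| ≤ 1`.
-/

open Polynomial Metric Filter Topology

theorem exists_eq_smul_apply_near_zero {𝕜 E : Type*} [RCLike 𝕜] [NormedAddCommGroup E]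
    [NormedSpace 𝕜 E] [CompleteSpace E] {F : E → E} (hF : ContDiffAt 𝕜 1 F 0) {δ : ℝ}
    (hδ : 0 < δ) :
    ∃ η > 0, ∀ c : 𝕜, ‖c‖ < η → ∃ w, w = c • F w ∧ ‖w‖ ≤ ‖c‖ * (‖F 0‖ + δ) := by
  obtain ⟨K, t, ht, hlip⟩ := hF.exists_lipschitzOnWith
  set M := ‖F 0‖ + δ
  have hM : 0 < M := by positivity
  have hbound : ∀ᶠ w in 𝓝 0, ‖F w‖ < M :=
    hF.continuousAt.norm.eventually (gt_mem_nhds (by linarith))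
  obtain ⟨ρ, hρ, hball⟩ := nhds_basis_closedBall.mem_iff.1 (inter_mem ht hbound)
  refine ⟨min (ρ / M) (1 / (K + 1)), by positivity, fun c hc => ?_⟩
  have hcM : ‖c‖ * M ≤ ρ := (le_div_iff₀ hM).1 (hc.le.trans (min_le_left _ _))
  have hcK : ‖c‖₊ * K < 1 := by
    have : ‖c‖ * (K + 1) < 1 := (lt_div_iff₀ (by positivity)).1 (hc.trans_le (min_le_right _ _))
    rw [← NNReal.coe_lt_coe]; push_cast
    nlinarith [norm_nonneg c]
  set s := closedBall (0 : E) (‖c‖ * M)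
  have hs : s ⊆ t ∩ {w | ‖F w‖ < M} := (closedBall_subset_closedBall hcM).trans hball
  have hmaps : Set.MapsTo (fun w => c • F w) s s := fun w hw => by
    rw [mem_closedBall_zero_iff, norm_smul]
    exact mul_le_mul_of_nonneg_left (hs hw).2.le (norm_nonneg c)
  have hlip' : LipschitzOnWith (‖c‖₊ * K) (fun w => c • F w) s :=
    (lipschitzWith_smul c).comp_lipschitzOnWith (hlip.mono fun w hw => (hs hw).1)
  obtain ⟨w, hws, hfix, -⟩ := ContractingWith.exists_fixedPoint' isClosed_closedBall.isComplete
    hmaps ⟨hcK, hlip'.mapsToRestrict hmaps⟩ (mem_closedBall_self (by positivity))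
    (edist_ne_top _ _)
  exact ⟨w, hfix.symm, mem_closedBall_zero_iff.1 hws⟩

theorem AnalyticAt.exists_sub_pow_eq_mul_near {u : ℂ → ℂ} {z₀ : ℂ} (hu : AnalyticAt ℂ u z₀)
    {ℓ : ℕ} (hℓ : ℓ ≠ 0) {δ : ℝ} (hδ : 0 < δ) :
    ∃ ε₀ > 0, ∀ c : ℂ, ‖c‖ < ε₀ →
      ∃ z, (z - z₀) ^ ℓ = c * u z ∧ ‖z - z₀‖ ≤ (‖c‖ * ‖u z₀‖) ^ (ℓ⁻¹ : ℝ) * (1 + δ) := by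
  by_cases h0 : u z₀ = 0
  · exact ⟨1, one_pos, fun c _ => ⟨z₀, by simp [h0, hℓ], by simp; positivity⟩⟩
  set F : ℂ → ℂ := fun w => (u (z₀ + w) / u z₀) ^ (ℓ⁻¹ : ℂ)
  have hF0 : F 0 = 1 := by simp [F, h0]
  have hF : AnalyticAt ℂ F 0 := by
    have hshift : AnalyticAt ℂ (fun w => u (z₀ + w)) 0 :=
      (by simpa using hu : AnalyticAt ℂ u (z₀ + 0)).fun_comp (analyticAt_const.add analyticAt_id)
    exact hshift.div_const.cpow analyticAt_const (by simp [h0])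
  obtain ⟨η, hη, hfix⟩ := exists_eq_smul_apply_near_zero hF.contDiffAt hδ
  have hu0 : 0 < ‖u z₀‖ := norm_pos_iff.2 h0
  refine ⟨η ^ ℓ / ‖u z₀‖, by positivity, fun c hc => ?_⟩
  set a := (c * u z₀) ^ (ℓ⁻¹ : ℂ)
  have ha : ‖a‖ = (‖c‖ * ‖u z₀‖) ^ (ℓ⁻¹ : ℝ) := by
    rw [← norm_mul, ← Complex.norm_cpow_real]; push_cast; rfl
  have haη : ‖a‖ < η := by
    rw [ha, ← Real.pow_rpow_inv_natCast hη.le hℓ]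
    exact Real.rpow_lt_rpow (by positivity) ((lt_div_iff₀ hu0).1 hc) (by positivity)
  obtain ⟨w, hw, hwa⟩ := hfix a haη
  refine ⟨z₀ + w, ?_, ?_⟩
  · calc (z₀ + w - z₀) ^ ℓ = a ^ ℓ * F w ^ ℓ := by
          rw [add_sub_cancel_left, ← mul_pow, ← smul_eq_mul, ← hw]
      _ = c * u (z₀ + w) := by
        simp only [a, F, Complex.cpow_nat_inv_pow _ hℓ]; field_simp
  · simpa [ha, hF0] using hwa

theorem Polynomial.exists_isRoot_pow_mul_add_C_mul_near {G Φ : ℂ[X]} {z₀ : ℂ}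
    (hG : G.eval z₀ ≠ 0) {ℓ : ℕ} (hℓ : ℓ ≠ 0) {δ : ℝ} (hδ : 0 < δ) :
    ∃ ε₀ > 0, ∀ c : ℂ, ‖c‖ < ε₀ → ∃ z, ((X - C z₀) ^ ℓ * G + C c * Φ).IsRoot z ∧
      ‖z₀ - z‖ ≤ (‖c‖ * ‖Φ.eval z₀ / G.eval z₀‖) ^ (ℓ⁻¹ : ℝ) * (1 + δ) := by
  have hu : AnalyticAt ℂ (fun z => -Φ.eval z / G.eval z) z₀ :=
    (AnalyticOnNhd.eval_polynomial Φ z₀ trivial).neg.div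
      (AnalyticOnNhd.eval_polynomial G z₀ trivial) hG
  obtain ⟨ε₀, hε₀, hsol⟩ := hu.exists_sub_pow_eq_mul_near hℓ hδ
  refine ⟨ε₀, hε₀, fun c hc => ?_⟩
  obtain ⟨z, hz, hzz₀⟩ := hsol c hc
  -- at a zero of `G` the equation would force `z = z₀`
  have hGz : G.eval z ≠ 0 := fun h => by
    rw [h, div_zero, mul_zero, pow_eq_zero_iff hℓ, sub_eq_zero] at hz
    exact hG (hz ▸ h)
  refine ⟨z, ?_, ?_⟩
  · simp only [IsRoot, eval_add, eval_mul, eval_pow, eval_sub, eval_X, eval_C, hz]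
    field_simp
    ring
  · rwa [norm_sub_rev, neg_div, norm_neg] at hzz₀

theorem Polynomial.map_eq_X_sub_C_pow_rootMultiplicity_mul {R S : Type*} [CommRing R]
    [CommRing S] (f : R →+* S) (p : R[X]) (r : R) :
    p.map f = (X - C (f r)) ^ p.rootMultiplicity r *
      (p /ₘ (X - C r) ^ p.rootMultiplicity r).map f := by
  conv_lhs => rw [← p.pow_mul_divByMonic_rootMultiplicity_eq r]
  rw [Polynomial.map_mul, Polynomial.map_pow, Polynomial.map_sub, map_X, map_C]

theorem root_perturbation_bound_general (n ℓ k : ℕ) (hℓ : 1 ≤ ℓ) (hk : k ≤ n)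
    (p : Polynomial ℝ) (hp0 : p ≠ 0)
    (r : ℝ) (hr : r ∈ Set.Icc (-1 : ℝ) 1)
    (hmult : p.rootMultiplicity r = ℓ)
    (φ : ℕ → Polynomial ℝ)
    (hφbd : ∀ j ≤ n, ∀ x ∈ Set.Icc (-1 : ℝ) 1, |(φ j).eval x| ≤ 1) :
    ∀ δ > 0, ∃ ε₀ > 0, ∀ ε : ℝ, 0 < ε → ε < ε₀ →
      ∃ z : ℂ, ((p + C ε * φ k).map (algebraMap ℝ ℂ)).IsRoot z ∧
        ‖(r : ℂ) - z‖ ≤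
          ε ^ ((1 : ℝ) / ℓ) *
            |(Polynomial.derivative^[ℓ] p).eval r / (Nat.factorial ℓ : ℝ)| ^ (-(1 : ℝ) / ℓ) *
            (1 + δ) := by
  intro δ hδ
  subst hmult
  set g := p /ₘ (X - C r) ^ p.rootMultiplicity r
  have hgr : g.eval r ≠ 0 := eval_divByMonic_pow_rootMultiplicity_ne_zero r hp0
  have heval (q : ℝ[X]) : (q.map (algebraMap ℝ ℂ)).eval (r : ℂ) = q.eval r := by
    rw [eval_map_algebraMap, ← Complex.coe_algebraMap, aeval_algebraMap_apply_eq_algebraMap_eval]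
  rw [eval_iterate_derivative_rootMultiplicity, nsmul_eq_mul,
    mul_div_cancel_left₀ _ (by positivity)]
  obtain ⟨ε₀, hε₀, hroots⟩ := exists_isRoot_pow_mul_add_C_mul_near
    (G := g.map (algebraMap ℝ ℂ)) (Φ := (φ k).map (algebraMap ℝ ℂ)) (z₀ := r)
    (by rw [heval]; exact_mod_cast hgr) (Nat.one_le_iff_ne_zero.1 hℓ) hδ
  refine ⟨ε₀, hε₀, fun ε hε hεε₀ => ?_⟩
  obtain ⟨z, hz, hzr⟩ := hroots ε (by simpa [abs_of_pos hε] using hεε₀)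
  refine ⟨z, ?_, hzr.trans ?_⟩
  · rwa [Polynomial.map_add, p.map_eq_X_sub_C_pow_rootMultiplicity_mul, Polynomial.map_mul, map_C]
  have hA : 0 < |g.eval r| := abs_pos.2 hgr
  have hcoeff :
      ‖(ε : ℂ)‖ * ‖(((φ k).eval r : ℝ) : ℂ) / ((g.eval r : ℝ) : ℂ)‖ ≤ ε * |g.eval r|⁻¹ := by
    rw [norm_div, Complex.norm_real, Complex.norm_real, Complex.norm_real,
      Real.norm_of_nonneg hε.le, Real.norm_eq_abs, Real.norm_eq_abs, div_eq_mul_inv]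
    gcongr
    exact mul_le_of_le_one_left (by positivity) (hφbd k hk r hr)
  rw [heval, heval]
  gcongr
  calc _ ≤ (ε * |g.eval r|⁻¹) ^ (_⁻¹ : ℝ) := by gcongr
    _ = _ := by
      rw [Real.mul_rpow hε.le (by positivity), Real.inv_rpow hA.le, ← Real.rpow_neg hA.le,
        one_div, neg_div, one_div]

/-- Sensitivity of a multiplicity-`ℓ` root under a coefficient perturbation: the perturbed
polynomial `p + ε φ_k` has a root within `ε^{1/ℓ} |p^{(ℓ)}(r)/ℓ!|^{-1/ℓ} (1 + o(1))` of `r`. -/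
theorem root_perturbation_bound (n ℓ k : ℕ) (hℓ : 1 ≤ ℓ) (hk : k ≤ n)
    (p : Polynomial ℝ) (hp0 : p ≠ 0)
    (r : ℝ) (hr : r ∈ Set.Icc (-1 : ℝ) 1)
    (hroot : p.IsRoot r) (hmult : p.rootMultiplicity r = ℓ)
    (φ : ℕ → Polynomial ℝ)
    (hφbd : ∀ j ≤ n, ∀ x ∈ Set.Icc (-1 : ℝ) 1, |(φ j).eval x| ≤ 1)
    (b : ℕ → ℝ) (hrep : p = ∑ j ∈ Finset.range (n + 1), C (b j) * φ j) :
    ∀ δ > 0, ∃ ε₀ > 0, ∀ ε : ℝ, 0 < ε → ε < ε₀ →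
      ∃ z : ℂ, ((p + C ε * φ k).map (algebraMap ℝ ℂ)).IsRoot z ∧
        ‖(r : ℂ) - z‖ ≤
          ε ^ ((1 : ℝ) / ℓ) *
            |(Polynomial.derivative^[ℓ] p).eval r / (Nat.factorial ℓ : ℝ)| ^ (-(1 : ℝ) / ℓ) *
            (1 + δ) :=
  root_perturbation_bound_general n ℓ k hℓ hk p hp0 r hr hmult φ hφbd
end
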